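/- arXiv:0707.4496 — 3 statements merged into one kernel-verified Lean document; each statement's English description precedes it below -/
import Mathlib

section
/- Let 𝒞 be a class of L-structures with pregeometries satisfying axioms I and II, and let H, H' ∈ 𝒞 with dim H ≤ ℵ₁. Let G ⊆ H be empty or a countable closed subset, and let f₀ : G → H' be a closed embedding (the empty map if G is empty). Let B be a basis of H over G and suppose ψ_B : H ⇀ H' is an injective partial map with domain B whose image is an independent set over the image of f₀. Then ψ := f₀ ∪ ψ_B extends to a closed embedding ψ̂ : H → H'. In particular, if the image of ψ spans H' (its closure is all of H'), then ψ̂ is an isomorphism. -/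
/-!  Common framework: quasiminimal excellent classes (Zilber / Kirby). -/

open FirstOrder FirstOrder.Language Cardinal Set

universe u

namespace QMEC

variable (L : FirstOrder.Language.{u, u})

/-- An `L`-structure equipped with a closure operator (intended to be a pregeometry). -/
structure QMModel : Type (u + 1) where
  carrier : Type u
  [str : L.Structure carrier]
  cl : Set carrier → Set carrier

attribute [instance] QMModel.str

/-- `cl` is a pregeometry on `α`. -/
structure IsPregeom {α : Type u} (cl : Set α → Set α) : Prop where
  subset_cl : ∀ X : Set α, X ⊆ cl X
  mono : ∀ ⦃X Y : Set α⦄, X ⊆ Y → cl X ⊆ cl Y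
  idem : ∀ X : Set α, cl (cl X) = cl X
  finChar : ∀ (X : Set α) (y : α), y ∈ cl X → ∃ X₀ : Finset α, ↑X₀ ⊆ X ∧ y ∈ cl ↑X₀
  exchange : ∀ (X : Set α) (y z : α), y ∈ cl (X ∪ {z}) → y ∉ cl X → z ∈ cl (X ∪ {y})

/-- `B` is independent over `G`. -/
def IndepOver {α : Type u} (cl : Set α → Set α) (G B : Set α) : Prop :=
  ∀ b ∈ B, b ∉ cl (G ∪ (B \ {b}))

/-- `B` is an independent set. -/
def Indep {α : Type u} (cl : Set α → Set α) (B : Set α) : Prop :=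
  ∀ b ∈ B, b ∉ cl (B \ {b})

/-- `B` is a basis of `α` over `G`. -/
def IsBasisOver {α : Type u} (cl : Set α → Set α) (G B : Set α) : Prop :=
  IndepOver cl G B ∧ cl (G ∪ B) = Set.univ

/-- `H` has dimension `κ`: it has a basis of cardinality `κ`. -/
def HasDim (H : QMModel L) (κ : Cardinal.{u}) : Prop :=
  ∃ B : Set H.carrier, IsBasisOver H.cl ∅ B ∧ #B = κ

variable {L}

/-- A partial embedding with domain `D`: injective on `D` and preserving (in both
directions) all quantifier-free formulas at tuples from `D`. -/
def IsPartialEmb (H H' : QMModel L) (D : Set H.carrier) (f : H.carrier → H'.carrier) : Prop :=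
  Set.InjOn f D ∧
    ∀ (n : ℕ) (φ : L.Formula (Fin n)), φ.IsQF →
      ∀ a : Fin n → H.carrier, (∀ i, a i ∈ D) →
        (φ.Realize a ↔ φ.Realize (f ∘ a))

/-- A closed partial embedding: the image of every closed subset of the domain is closed. -/
def IsClosedPartialEmb (H H' : QMModel L) (D : Set H.carrier)
    (f : H.carrier → H'.carrier) : Prop :=
  IsPartialEmb H H' D f ∧
    ∀ X ⊆ D, H.cl X = X → H'.cl (f '' X) = f '' X

/-- A crown: a finite union of closures of subsets of an independent set. -/
def IsCrown (H : QMModel L) (C : Set H.carrier) : Prop :=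
  ∃ (B : Set H.carrier) (n : ℕ) (Bs : Fin n → Set H.carrier),
    Indep H.cl B ∧ (∀ i, Bs i ⊆ B) ∧ C = ⋃ i, H.cl (Bs i)

/-- Combination `f ∪ g` of two partial maps: use `f` on `D`, `g` elsewhere. -/
noncomputable def combine {α β : Type*} (D : Set α) (f g : α → β) : α → β :=
  fun x => @ite _ (x ∈ D) (Classical.propDecidable _) (f x) (g x)

/-- Extension of a partial map by one pair `(y, y')`. -/
noncomputable def extend1 {α β : Type*} (f : α → β) (y : α) (y' : β) : α → β :=
  fun x => @ite _ (x = y) (Classical.propDecidable _) y' (f x)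

/-- The submodel of `H` on a substructure `S`, with prescribed closure operator. -/
def QMModel.substruct (H : QMModel L) (S : L.Substructure H.carrier)
    (cls : Set ↥S → Set ↥S) : QMModel L :=
  { carrier := ↥S, cl := cls }

/-- The restriction of the closure operator of `H` to a subset (as a subtype). -/
def QMModel.restrictCl (H : QMModel L) (S : L.Substructure H.carrier) :
    Set ↥S → Set ↥S :=
  fun Y => Subtype.val ⁻¹' H.cl (Subtype.val '' Y)

/-- `G` is the empty set or a countable closed subset of `H`. -/
def EmptyOrCtbleClosed (H : QMModel L) (G : Set H.carrier) : Prop :=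
  G = ∅ ∨ (G.Countable ∧ H.cl G = G)

/-- Axiom I (pregeometry) for a class of models. -/
structure AxiomI (C : QMModel L → Prop) : Prop where
  pregeom : ∀ H, C H → IsPregeom H.cl
  ccp : ∀ H, C H → ∀ X : Set H.carrier, X.Finite → (H.cl X).Countable
  closedSub : ∀ H, C H → ∀ X : Set H.carrier,
    ∃ S : L.Substructure H.carrier, (S : Set H.carrier) = H.cl X ∧
      C (H.substruct S (H.restrictCl S))
  clPreserved : ∀ H H' : QMModel L, C H → C H' →
    ∀ (D : Set H.carrier) (f : H.carrier → H'.carrier), IsPartialEmb H H' D f →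
      ∀ X ⊆ D, ∀ y ∈ H.cl X, y ∈ D → f y ∈ H'.cl (f '' X)

/-- Axiom II (ℵ₀-homogeneity over countable closed submodels and over ∅). -/
structure AxiomII (C : QMModel L → Prop) : Prop where
  homog1 : ∀ H H' : QMModel L, C H → C H' →
    ∀ (G : Set H.carrier) (G' : Set H'.carrier) (g : H.carrier → H'.carrier),
      EmptyOrCtbleClosed H G → EmptyOrCtbleClosed H' G' →
      IsPartialEmb H H' G g → g '' G = G' →
      ∀ x x', x ∉ H.cl G → x' ∉ H'.cl G' →
        IsPartialEmb H H' (G ∪ {x}) (extend1 g x x')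
  homog2 : ∀ H H' : QMModel L, C H → C H' →
    ∀ (G : Set H.carrier) (G' : Set H'.carrier) (g : H.carrier → H'.carrier),
      EmptyOrCtbleClosed H G → EmptyOrCtbleClosed H' G' →
      IsPartialEmb H H' G g → g '' G = G' →
      ∀ (X : Set H.carrier) (h : H.carrier → H'.carrier),
        X.Finite → (∀ z ∈ G, h z = g z) → IsPartialEmb H H' (G ∪ X) h →
        ∀ y ∈ H.cl (X ∪ G), ∃ y', IsPartialEmb H H' ((G ∪ X) ∪ {y}) (extend1 h y y')

/-- Axiom III (excellence): quantifier-free types over countable crowns are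
determined over finite subsets. -/
structure AxiomIII (C : QMModel L → Prop) : Prop where
  excellence : ∀ H H' : QMModel L, C H → C H' →
    ∀ (Cr : Set H.carrier) (g : H.carrier → H'.carrier),
      IsCrown H Cr → Cr.Countable → IsClosedPartialEmb H H' Cr g →
      ∀ X : Finset H.carrier, ↑X ⊆ H.cl Cr →
        ∃ C₀ : Finset H.carrier, ↑C₀ ⊆ Cr ∧
          ∀ f : H.carrier → H'.carrier,
            IsPartialEmb H H' (↑X ∪ ↑C₀) (combine ↑X f g) →
            IsPartialEmb H H' (↑X ∪ Cr) (combine ↑X f g)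

/-- A quasiminimal excellent class: a class of `L`-structures-with-pregeometries
satisfying axioms I, II and III. -/
structure IsQEC (C : QMModel L → Prop) : Prop where
  axI : AxiomI C
  axII : AxiomII C
  axIII : AxiomIII C

/-- Axiom IV: unions of (ordinal-indexed, i.e. well-ordered) chains of closed
embeddings, with the union pregeometry, stay in the class; and the class has an
infinite-dimensional model. -/
structure AxiomIV (C : QMModel L → Prop) : Prop where
  chains : ∀ (ι : Type u) [LinearOrder ι] [WellFoundedLT ι],
    ∀ (H : QMModel L) (S : ι → L.Substructure H.carrier)
      (cls : ∀ i, Set ↥(S i) → Set ↥(S i))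
      (hmono : ∀ i j : ι, i ≤ j → (S i : Set H.carrier) ⊆ (S j : Set H.carrier)),
      (⋃ i, (S i : Set H.carrier)) = Set.univ →
      (∀ i, C (H.substruct (S i) (cls i))) →
      (∀ (i j : ι) (hij : i ≤ j) (X : Set ↥(S i)), cls i X = X →
        cls j ((fun x : ↥(S i) => (⟨x.1, hmono i j hij x.2⟩ : ↥(S j))) '' X) =
          (fun x : ↥(S i) => (⟨x.1, hmono i j hij x.2⟩ : ↥(S j))) '' X) →
      (∀ X : Set H.carrier,
        H.cl X = ⋃ i, Subtype.val '' cls i (Subtype.val ⁻¹' X)) →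
      C H
  infDim : ∃ H, C H ∧ ∃ B : Set H.carrier, IsBasisOver H.cl ∅ B ∧ B.Infinite

/-- `C` is uncountably categorical: exactly one model of each uncountable
cardinality, up to isomorphism. -/
def UncountablyCategorical (C : QMModel L → Prop) : Prop :=
  ∀ κ : Cardinal.{u}, ℵ₀ < κ →
    (∃ H, C H ∧ #H.carrier = κ) ∧
    ∀ H H', C H → C H' → #H.carrier = κ → #H'.carrier = κ →
      Nonempty (H.carrier ≃[L] H'.carrier)

/-- Tuples `x`, `y` have the same quantifier-free type over `G`. -/
def SameQfTypeOver (H : QMModel L) (G : Set H.carrier) {n : ℕ}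
    (x y : Fin n → H.carrier) : Prop :=
  ∀ (k : ℕ) (φ : L.Formula (Fin n ⊕ Fin k)), φ.IsQF →
    ∀ c : Fin k → H.carrier, (∀ i, c i ∈ G) →
      (φ.Realize (Sum.elim x c) ↔ φ.Realize (Sum.elim y c))

/-- The reduct of a model along a language map, keeping the same pregeometry. -/
def QMModel.reduct {L0 : FirstOrder.Language.{u, u}} (φ : L0 →ᴸ L) (M : QMModel L) :
    QMModel L0 :=
  { carrier := M.carrier, str := φ.reduct M.carrier, cl := M.cl }

/-! ### Auxiliary lemmas -/

open Classical in
theorem extend1_pos {α β : Type*} (f : α → β) (y : α) (y' : β) : extend1 f y y' y = y' := by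
  simp [extend1]

open Classical in
theorem extend1_neg {α β : Type*} (f : α → β) (y : α) (y' : β) {x : α} (hx : x ≠ y) :
    extend1 f y y' x = f x := by
  simp [extend1, hx]

theorem IsPartialEmb.mono' {H H' : QMModel L} {D : Set H.carrier}
    {f : H.carrier → H'.carrier} (h : IsPartialEmb H H' D f) {D' : Set H.carrier}
    (hD : D' ⊆ D) : IsPartialEmb H H' D' f :=
  ⟨h.1.mono hD, fun n φ hφ a ha => h.2 n φ hφ a fun i => hD (ha i)⟩

theorem isPartialEmb_congr {H H' : QMModel L} {D : Set H.carrier}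
    {f g : H.carrier → H'.carrier} (hfg : ∀ x ∈ D, f x = g x)
    (h : IsPartialEmb H H' D f) : IsPartialEmb H H' D g := by
  constructor
  · intro x hx y hy hxy
    exact h.1 hx hy (by rw [hfg x hx, hfg y hy, hxy])
  · intro n φ hφ a ha
    have : g ∘ a = f ∘ a := funext fun i => (hfg (a i) (ha i)).symm
    rw [this]
    exact h.2 n φ hφ a ha

theorem isPartialEmb_inv {H H' : QMModel L} {D : Set H.carrier}
    {f : H.carrier → H'.carrier} (h : IsPartialEmb H H' D f)
    (e : H'.carrier → H.carrier) (he : ∀ x ∈ D, e (f x) = x) :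
    IsPartialEmb H' H (f '' D) e := by
  constructor
  · rintro _ ⟨x, hx, rfl⟩ _ ⟨y, hy, rfl⟩ hxy
    rw [he x hx, he y hy] at hxy
    rw [hxy]
  · intro n φ hφ a ha
    have key : ∀ i, ∃ x ∈ D, f x = a i := fun i => by
      obtain ⟨x, hx, hfx⟩ := ha i
      exact ⟨x, hx, hfx⟩
    have h1 : ∀ i, e (a i) ∈ D := fun i => by
      obtain ⟨x, hx, hfx⟩ := key i
      rw [← hfx, he x hx]; exact hx
    have h2 : f ∘ (e ∘ a) = a := funext fun i => by
      obtain ⟨x, hx, hfx⟩ := key i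
      simp only [Function.comp_apply, ← hfx, he x hx]
    have := h.2 n φ hφ (e ∘ a) h1
    rw [h2] at this
    exact this.symm

theorem IsPregeom.cl_union_cl_left {α : Type u} {cl : Set α → Set α} (pg : IsPregeom cl)
    (A C : Set α) : cl (cl A ∪ C) = cl (A ∪ C) := by
  apply le_antisymm
  · have h1 : cl A ∪ C ⊆ cl (A ∪ C) := by
      apply Set.union_subset
      · exact pg.mono Set.subset_union_left
      · exact Set.Subset.trans Set.subset_union_right (pg.subset_cl _)
    have := pg.mono h1
    rwa [pg.idem] at this
  · exact pg.mono (Set.union_subset_union_left _ (pg.subset_cl A))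

theorem IsPregeom.cl_iUnion_directed {α : Type u} {cl : Set α → Set α} (pg : IsPregeom cl)
    {σ : Type*} [Nonempty σ] (T : σ → Set α) (hd : Directed (· ⊆ ·) T) :
    cl (⋃ i, T i) = ⋃ i, cl (T i) := by
  apply le_antisymm
  · intro y hy
    obtain ⟨F, hF, hyF⟩ := pg.finChar _ y hy
    obtain ⟨i, hi⟩ := hd.exists_mem_subset_of_finset_subset_biUnion (by
      intro x hx
      simpa using hF hx)
    exact Set.mem_iUnion.2 ⟨i, pg.mono hi hyF⟩
  · exact Set.iUnion_subset fun i => pg.mono (Set.subset_iUnion T i)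

theorem cl_countable {α : Type u} {cl : Set α → Set α} (pg : IsPregeom cl)
    (hccp : ∀ X : Set α, X.Finite → (cl X).Countable) {S : Set α} (hS : S.Countable) :
    (cl S).Countable := by
  have hsub : cl S ⊆ ⋃ t ∈ {t : Set α | t.Finite ∧ t ⊆ S}, cl t := by
    intro y hy
    obtain ⟨F, hF, hyF⟩ := pg.finChar _ y hy
    exact Set.mem_biUnion ⟨F.finite_toSet, hF⟩ hyF
  exact Set.Countable.mono hsub
    (Set.Countable.biUnion (Set.countable_setOf_finite_subset hS) fun t ht => hccp t ht.1)

theorem exists_stage {α : Type*} {σ : Type*} [Nonempty σ] (T : σ → Set α)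
    (hd : Directed (· ⊆ ·) T) {n : ℕ} (a : Fin n → α) (ha : ∀ t, a t ∈ ⋃ s, T s) :
    ∃ s, ∀ t, a t ∈ T s := by
  induction n with
  | zero => exact ⟨Classical.arbitrary σ, fun t => t.elim0⟩
  | succ n ih =>
    obtain ⟨s1, hs1⟩ := ih (fun t => a t.castSucc) (fun t => ha _)
    obtain ⟨s2, hs2⟩ := Set.mem_iUnion.1 (ha (Fin.last n))
    obtain ⟨s3, h13, h23⟩ := hd s1 s2
    refine ⟨s3, fun t => ?_⟩
    induction t using Fin.lastCases with
    | last => exact h23 hs2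
    | cast t => exact h13 (hs1 t)
/-- The back-and-forth extension lemma: a partial embedding defined on a countable
closed (or empty) set together with finitely many extra points extends to the
closure, mapping it onto the closure of the image. -/
theorem BF {C : QMModel L → Prop} (hI : AxiomI C) (hII : AxiomII C)
    {H H' : QMModel L} (hH : C H) (hH' : C H')
    (G0 X0 : Set H.carrier) (h : H.carrier → H'.carrier)
    (hG0 : EmptyOrCtbleClosed H G0) (hG0' : EmptyOrCtbleClosed H' (h '' G0))
    (hX0 : X0.Finite) (hemb : IsPartialEmb H H' (G0 ∪ X0) h)
    (hE0 : H.cl (G0 ∪ X0) = ∅ → H'.cl (h '' (G0 ∪ X0)) = ∅) :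
    ∃ F, (∀ x ∈ G0 ∪ X0, F x = h x) ∧ IsPartialEmb H H' (H.cl (G0 ∪ X0)) F ∧
      F '' (H.cl (G0 ∪ X0)) = H'.cl (h '' (G0 ∪ X0)) := by
  have pg := hI.pregeom H hH
  have pg' := hI.pregeom H' hH'
  set E := H.cl (G0 ∪ X0) with hEdef
  set E' := H'.cl (h '' (G0 ∪ X0)) with hE'def
  have hGX_sub_E : G0 ∪ X0 ⊆ E := pg.subset_cl _
  have hhGX_sub_E' : h '' (G0 ∪ X0) ⊆ E' := pg'.subset_cl _
  rcases Set.eq_empty_or_nonempty E with hEe | ⟨w0, hw0⟩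
  · refine ⟨h, fun x hx => rfl, ?_, ?_⟩
    · rw [hEe]
      exact hemb.mono' (Set.empty_subset _)
    · rw [hEe, Set.image_empty, hE0 hEe]
  haveI : Nonempty H.carrier := ⟨w0⟩
  have hG0ctble : G0.Countable := by
    rcases hG0 with hh | hh
    · rw [hh]; exact Set.countable_empty
    · exact hh.1
  have hGXctble : (G0 ∪ X0).Countable := hG0ctble.union hX0.countable
  have hEctble : E.Countable := cl_countable pg (hI.ccp H hH) hGXctble
  have hbaseemb : IsPartialEmb H H' G0 h := hemb.mono' Set.subset_union_left
  have hE'ne : E'.Nonempty := by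
    by_cases hc : w0 ∈ G0 ∪ X0
    · exact ⟨h w0, hhGX_sub_E' ⟨w0, hc, rfl⟩⟩
    · obtain ⟨y', hy'⟩ := hII.homog2 H H' hH hH' G0 (h '' G0) h hG0 hG0' hbaseemb rfl
        X0 h hX0 (fun z _ => rfl) hemb w0 (by rw [Set.union_comm X0 G0]; exact hw0)
      have him : extend1 h w0 y' '' (G0 ∪ X0) = h '' (G0 ∪ X0) := by
        apply Set.image_congr
        intro x hx
        exact extend1_neg h w0 y' (fun hxy => hc (hxy ▸ hx))
      have := hI.clPreserved H H' hH hH' ((G0 ∪ X0) ∪ {w0}) (extend1 h w0 y') hy'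
        (G0 ∪ X0) Set.subset_union_left w0 hw0 (Set.mem_union_right _ rfl)
      rw [him, extend1_pos] at this
      exact ⟨y', this⟩
  haveI : Nonempty H'.carrier := ⟨hE'ne.choose⟩
  have hE'ctble : E'.Countable := cl_countable pg' (hI.ccp H' hH') (hGXctble.image h)
  obtain ⟨e, he⟩ := hEctble.exists_eq_range ⟨w0, hw0⟩
  obtain ⟨e', he'⟩ := hE'ctble.exists_eq_range hE'ne
  -- invariant for the finite stages
  set Inv : Set H.carrier × (H.carrier → H'.carrier) → Prop :=
    fun p => p.1.Finite ∧ X0 ⊆ p.1 ∧ p.1 ⊆ E ∧ (∀ x ∈ G0 ∪ X0, p.2 x = h x) ∧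
      IsPartialEmb H H' (G0 ∪ p.1) p.2 ∧ p.2 '' p.1 ⊆ E' with hInvdef
  set Step : ℕ → (Set H.carrier × (H.carrier → H'.carrier)) →
      (Set H.carrier × (H.carrier → H'.carrier)) → Prop :=
    fun n p q => Inv q ∧ p.1 ⊆ q.1 ∧ (∀ x ∈ G0 ∪ p.1, q.2 x = p.2 x) ∧
      e n ∈ G0 ∪ q.1 ∧ e' n ∈ q.2 '' (G0 ∪ q.1) with hStepdef
  have key : ∀ n p, Inv p → ∃ q, Step n p q := by
    intro n p hp
    obtain ⟨hfin, hX0p, hpE, hagree, hpemb, himg⟩ := hp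
    have hG0agree : ∀ x ∈ G0, p.2 x = h x := fun x hx => hagree x (Or.inl hx)
    have hG0img : p.2 '' G0 = h '' G0 := Set.image_congr hG0agree
    have hG0subE : G0 ⊆ E := fun x hx => hGX_sub_E (Or.inl hx)
    have hdomE : G0 ∪ p.1 ⊆ E := Set.union_subset hG0subE hpE
    have hEsubclP : E ⊆ H.cl (G0 ∪ p.1) :=
      pg.mono (Set.union_subset_union_right _ hX0p)
    have himgE' : p.2 '' (G0 ∪ p.1) ⊆ E' := by
      rw [Set.image_union, hG0img]
      exact Set.union_subset
        (fun z hz => hhGX_sub_E' (Set.image_mono Set.subset_union_left hz)) himg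
    -- forward step
    obtain ⟨p1, hp1inv, hp1sup, hp1agree, hp1e⟩ :
        ∃ p1, Inv p1 ∧ p.1 ⊆ p1.1 ∧ (∀ x ∈ G0 ∪ p.1, p1.2 x = p.2 x) ∧
          e n ∈ G0 ∪ p1.1 := by
      by_cases hcase : e n ∈ G0 ∪ p.1
      · exact ⟨p, ⟨hfin, hX0p, hpE, hagree, hpemb, himg⟩, subset_rfl,
          fun x _ => rfl, hcase⟩
      · have henE : e n ∈ E := by rw [he]; exact Set.mem_range_self n
        obtain ⟨y', hy'⟩ := hII.homog2 H H' hH hH' G0 (h '' G0) h hG0 hG0' hbaseemb rfl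
          p.1 p.2 hfin hG0agree hpemb (e n)
          (by rw [Set.union_comm p.1 G0]; exact hEsubclP henE)
        refine ⟨(p.1 ∪ {e n}, extend1 p.2 (e n) y'), ⟨?_, ?_, ?_, ?_, ?_, ?_⟩, ?_, ?_, ?_⟩
        · exact hfin.union (Set.finite_singleton _)
        · exact hX0p.trans Set.subset_union_left
        · exact Set.union_subset hpE (by simpa using henE)
        · intro x hx
          show extend1 p.2 (e n) y' x = h x
          rw [extend1_neg p.2 (e n) y'
            (fun hxe => hcase (hxe ▸ (Set.union_subset_union_right G0 hX0p hx))),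
            hagree x hx]
        · have := hy'
          rw [Set.union_assoc] at this
          exact this
        · show extend1 p.2 (e n) y' '' (p.1 ∪ {e n}) ⊆ E'
          rw [Set.image_union, Set.image_singleton, extend1_pos]
          apply Set.union_subset
          · rw [Set.image_congr (fun x hx => extend1_neg p.2 (e n) y'
              (fun hxe => hcase (hxe ▸ Or.inr hx)))]
            exact himg
          · rw [Set.singleton_subset_iff]
            have := hI.clPreserved H H' hH hH' ((G0 ∪ p.1) ∪ {e n})
              (extend1 p.2 (e n) y') hy' (G0 ∪ p.1) Set.subset_union_left (e n)
              (hEsubclP henE) (Set.mem_union_right _ rfl)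
            rw [extend1_pos] at this
            rw [Set.image_congr (fun x hx => extend1_neg p.2 (e n) y'
              (fun hxe => hcase (hxe ▸ hx)))] at this
            have h2 : H'.cl (p.2 '' (G0 ∪ p.1)) ⊆ E' := by
              have := pg'.mono himgE'
              rwa [pg'.idem] at this
            exact h2 this
        · exact Set.subset_union_left
        · intro x hx
          exact extend1_neg p.2 (e n) y' (fun hxe => hcase (hxe ▸ hx))
        · exact Or.inr (Set.mem_union_right _ rfl)
    obtain ⟨hfin1, hX0p1, hp1E, hagree1, hp1emb, himg1⟩ := hp1inv
    -- backward step
    by_cases hcase2 : e' n ∈ p1.2 '' (G0 ∪ p1.1)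
    · exact ⟨p1, ⟨hfin1, hX0p1, hp1E, hagree1, hp1emb, himg1⟩, hp1sup, hp1agree,
        hp1e, hcase2⟩
    set D1 := G0 ∪ p1.1 with hD1def
    set f1 := p1.2 with hf1def
    have hG0agree1 : ∀ x ∈ G0, f1 x = h x := fun x hx => hagree1 x (Or.inl hx)
    have hG0img1 : f1 '' G0 = h '' G0 := Set.image_congr hG0agree1
    have hD1E : D1 ⊆ E := Set.union_subset hG0subE hp1E
    set k := Function.invFunOn f1 D1 with hkdef
    have hkleft : ∀ x ∈ D1, k (f1 x) = x := fun x hx => hp1emb.1.leftInvOn_invFunOn hx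
    have hkemb : IsPartialEmb H' H (f1 '' D1) k := isPartialEmb_inv hp1emb k hkleft
    have hkimg : k '' (f1 '' D1) = D1 := by
      apply Set.Subset.antisymm
      · rintro _ ⟨_, ⟨x, hx, rfl⟩, rfl⟩
        rw [hkleft x hx]; exact hx
      · intro x hx
        exact ⟨f1 x, ⟨x, hx, rfl⟩, hkleft x hx⟩
    set ginv := Function.invFunOn h G0 with hginvdef
    have hginvleft : ∀ x ∈ G0, ginv (h x) = x := fun x hx =>
      hbaseemb.1.leftInvOn_invFunOn hx
    have hbinvemb : IsPartialEmb H' H (h '' G0) ginv :=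
      isPartialEmb_inv hbaseemb ginv hginvleft
    have hbinvimg : ginv '' (h '' G0) = G0 := by
      apply Set.Subset.antisymm
      · rintro _ ⟨_, ⟨x, hx, rfl⟩, rfl⟩
        rw [hginvleft x hx]; exact hx
      · intro x hx
        exact ⟨h x, ⟨x, hx, rfl⟩, hginvleft x hx⟩
    have hkagree : ∀ z ∈ h '' G0, k z = ginv z := by
      rintro _ ⟨x, hx, rfl⟩
      rw [hginvleft x hx, ← hG0agree1 x hx, hkleft x (Or.inl hx)]
    have hdomid : f1 '' D1 = h '' G0 ∪ f1 '' p1.1 := by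
      rw [hD1def, Set.image_union, hG0img1]
    have hE'subclD1 : E' ⊆ H'.cl (f1 '' D1) := by
      have h1 : h '' (G0 ∪ X0) = f1 '' (G0 ∪ X0) := (Set.image_congr hagree1).symm
      have h2 : f1 '' (G0 ∪ X0) ⊆ f1 '' D1 :=
        Set.image_mono (Set.union_subset_union_right _ hX0p1)
      rw [hE'def, h1]
      exact pg'.mono h2
    have he'nE' : e' n ∈ E' := by rw [he']; exact Set.mem_range_self n
    obtain ⟨y, hy⟩ := hII.homog2 H' H hH' hH (h '' G0) G0 ginv hG0' hG0 hbinvemb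
      hbinvimg (f1 '' p1.1) k (hfin1.image f1) hkagree (by rwa [← hdomid]) (e' n)
      (by rw [Set.union_comm, ← hdomid]; exact hE'subclD1 he'nE')
    set m := extend1 k (e' n) y with hmdef
    set Dm := (h '' G0 ∪ f1 '' p1.1) ∪ {e' n} with hDmdef
    have hmemb : IsPartialEmb H' H Dm m := hy
    have hcase2' : e' n ∉ f1 '' D1 := by rwa [hdomid] at hcase2 ⊢
    have hmk : ∀ z ∈ f1 '' D1, m z = k z := fun z hz =>
      extend1_neg k (e' n) y (fun hze => hcase2' (hze ▸ hz))
    have hynotin : y ∉ D1 := by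
      intro hyD1
      have h1 : f1 y ∈ f1 '' D1 := ⟨y, hyD1, rfl⟩
      have h2 : m (f1 y) = y := by rw [hmk _ h1, hkleft y hyD1]
      have h3 : m (e' n) = y := extend1_pos k (e' n) y
      have h4 : f1 y ∈ Dm := by rw [hDmdef, ← hdomid]; exact Or.inl h1
      have h5 : (e' n : H'.carrier) ∈ Dm := Or.inr rfl
      have := hmemb.1 h4 h5 (h2.trans h3.symm)
      exact hcase2' (this ▸ h1)
    set q2 := extend1 f1 y (e' n) with hq2def
    have hq2m : ∀ z ∈ Dm, q2 (m z) = z := by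
      intro z hz
      rcases hz with hz | hz
      · rw [← hdomid] at hz
        have hkz : k z ∈ D1 := by
          obtain ⟨x, hx, rfl⟩ := hz
          rw [hkleft x hx]; exact hx
        have h2 : q2 (k z) = f1 (k z) :=
          extend1_neg f1 y (e' n) (fun hh => hynotin (hh ▸ hkz))
        rw [hmk z hz, h2]
        obtain ⟨x, hx, rfl⟩ := hz
        rw [hkleft x hx]
      · rw [Set.mem_singleton_iff] at hz
        subst hz
        have h3 : m (e' n) = y := extend1_pos k (e' n) y
        have h4 : q2 y = e' n := extend1_pos f1 y (e' n)
        rw [h3, h4]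
    have hqemb0 : IsPartialEmb H H' (m '' Dm) q2 := isPartialEmb_inv hmemb q2 hq2m
    have hme : m (e' n) = y := extend1_pos k (e' n) y
    have hmimg : m '' Dm = D1 ∪ {y} := by
      rw [hDmdef, Set.image_union, Set.image_singleton, hme, ← hdomid,
        Set.image_congr hmk, hkimg]
    have hyE : y ∈ E := by
      have := hI.clPreserved H' H hH' hH Dm m hmemb (h '' G0 ∪ f1 '' p1.1)
        Set.subset_union_left (e' n)
        (by rw [← hdomid]; exact hE'subclD1 he'nE') (Or.inr rfl)
      rw [hme] at this
      have him : m '' (h '' G0 ∪ f1 '' p1.1) = D1 := by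
        rw [← hdomid, Set.image_congr hmk, hkimg]
      rw [him] at this
      have h2 : H.cl D1 ⊆ E := by
        have := pg.mono hD1E
        rwa [pg.idem] at this
      exact h2 this
    refine ⟨(p1.1 ∪ {y}, q2), ⟨?_, ?_, ?_, ?_, ?_, ?_⟩, ?_, ?_, ?_, ?_⟩
    · exact hfin1.union (Set.finite_singleton _)
    · exact hX0p1.trans Set.subset_union_left
    · exact Set.union_subset hp1E (by simpa using hyE)
    · intro x hx
      show extend1 f1 y (e' n) x = h x
      rw [extend1_neg f1 y (e' n)
          (fun hxy => hynotin (hxy ▸ (Set.union_subset_union_right G0 hX0p1 hx))),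
        hagree1 x hx]
    · have := hqemb0
      rw [hmimg, hD1def, Set.union_assoc] at this
      exact this
    · show extend1 f1 y (e' n) '' (p1.1 ∪ {y}) ⊆ E'
      rw [Set.image_union, Set.image_singleton, extend1_pos]
      apply Set.union_subset
      · rw [Set.image_congr (fun x hx => extend1_neg f1 y (e' n)
          (fun hxy => hynotin (hxy ▸ Or.inr hx)))]
        exact himg1
      · rw [Set.singleton_subset_iff]
        exact he'nE'
    · exact hp1sup.trans Set.subset_union_left
    · intro x hx
      show extend1 f1 y (e' n) x = p.2 x
      have hx1 : x ∈ G0 ∪ p1.1 := Set.union_subset_union_right G0 hp1sup hx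
      rw [extend1_neg f1 y (e' n) (fun hxy => hynotin (hxy ▸ hx1)), hp1agree x hx]
    · rcases hp1e with hx | hx
      · exact Or.inl hx
      · exact Or.inr (Set.mem_union_left _ hx)
    · refine ⟨y, Or.inr (Set.mem_union_right _ rfl), extend1_pos f1 y (e' n)⟩
  -- the increasing sequence of finite extensions
  haveI : Nonempty (Set H.carrier × (H.carrier → H'.carrier)) := ⟨(X0, h)⟩
  set seq : ℕ → Set H.carrier × (H.carrier → H'.carrier) :=
    fun n => Nat.rec (X0, h) (fun n p => Classical.epsilon (Step n p)) n with hseqdef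
  have hseq0 : seq 0 = (X0, h) := rfl
  have hseqS : ∀ n, seq (n + 1) = Classical.epsilon (Step n (seq n)) := fun n => rfl
  have inv0 : Inv (X0, h) := by
    refine ⟨hX0, subset_rfl, fun x hx => hGX_sub_E (Or.inr hx), fun x _ => rfl, hemb, ?_⟩
    exact fun z hz => hhGX_sub_E' (Set.image_mono Set.subset_union_right hz)
  have invAll : ∀ n, Inv (seq n) := by
    intro n
    induction n with
    | zero => exact inv0
    | succ n ih =>
      rw [hseqS n]
      exact (Classical.epsilon_spec (key n (seq n) ih)).1
  have stepAll : ∀ n, Step n (seq n) (seq (n + 1)) := by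
    intro n
    rw [hseqS n]
    exact Classical.epsilon_spec (key n (seq n) (invAll n))
  have domMono : ∀ m n, m ≤ n → (seq m).1 ⊆ (seq n).1 := by
    intro m n hmn
    induction n, hmn using Nat.le_induction with
    | base => exact subset_rfl
    | succ n hmn ih => exact ih.trans (stepAll n).2.1
  have agreeSeq : ∀ m n, m ≤ n → ∀ x ∈ G0 ∪ (seq m).1, (seq n).2 x = (seq m).2 x := by
    intro m n hmn
    induction n, hmn using Nat.le_induction with
    | base => exact fun x _ => rfl
    | succ n hmn ih =>
      intro x hx
      rw [(stepAll n).2.2.1 x (Set.union_subset_union_right G0 (domMono m n hmn) hx),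
        ih x hx]
  set F : H.carrier → H'.carrier := fun x =>
    @dite _ (∃ n, x ∈ G0 ∪ (seq n).1) (Classical.propDecidable _)
      (fun hx => (seq (Exists.choose hx)).2 x) (fun _ => h x) with hFdef
  have Fval : ∀ n x, x ∈ G0 ∪ (seq n).1 → F x = (seq n).2 x := by
    intro n x hxn
    have hx : ∃ n, x ∈ G0 ∪ (seq n).1 := ⟨n, hxn⟩
    have : F x = (seq (Exists.choose hx)).2 x := dif_pos hx
    rw [this]
    rcases le_total (Exists.choose hx) n with hle | hle
    · exact (agreeSeq _ n hle x hx.choose_spec).symm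
    · exact agreeSeq n _ hle x hxn
  have domE : E = ⋃ n, (G0 ∪ (seq n).1) := by
    apply Set.Subset.antisymm
    · intro x hx
      rw [he] at hx
      obtain ⟨n, rfl⟩ := hx
      exact Set.mem_iUnion.2 ⟨n + 1, (stepAll n).2.2.2.1⟩
    · refine Set.iUnion_subset fun n => Set.union_subset ?_ (invAll n).2.2.1
      exact fun x hx => hGX_sub_E (Or.inl hx)
  have FeqH : ∀ x ∈ G0 ∪ X0, F x = h x := fun x hx => Fval 0 x hx
  have embF : IsPartialEmb H H' E F := by
    constructor
    · intro x hx y hy hxy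
      rw [domE] at hx hy
      obtain ⟨nx, hnx⟩ := Set.mem_iUnion.1 hx
      obtain ⟨ny, hny⟩ := Set.mem_iUnion.1 hy
      set N := max nx ny with hN
      have hx' : x ∈ G0 ∪ (seq N).1 :=
        Set.union_subset_union_right G0 (domMono nx N (le_max_left _ _)) hnx
      have hy' : y ∈ G0 ∪ (seq N).1 :=
        Set.union_subset_union_right G0 (domMono ny N (le_max_right _ _)) hny
      rw [Fval N x hx', Fval N y hy'] at hxy
      exact (invAll N).2.2.2.2.1.1 hx' hy' hxy
    · intro n φ hφ a ha
      have hex : ∀ i, ∃ m, a i ∈ G0 ∪ (seq m).1 := fun i => by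
        have := ha i
        rw [domE] at this
        exact Set.mem_iUnion.1 this
      choose ns hns using hex
      set N := Finset.univ.sup ns with hNdef
      have haN : ∀ i, a i ∈ G0 ∪ (seq N).1 := fun i =>
        Set.union_subset_union_right G0
          (domMono (ns i) N (Finset.le_sup (Finset.mem_univ i))) (hns i)
      have hcomp : F ∘ a = (seq N).2 ∘ a := funext fun i => Fval N (a i) (haN i)
      rw [hcomp]
      exact (invAll N).2.2.2.2.1.2 n φ hφ a haN
  have imgF : F '' E = E' := by
    apply Set.Subset.antisymm
    · rintro _ ⟨x, hx, rfl⟩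
      rw [domE] at hx
      obtain ⟨n, hn⟩ := Set.mem_iUnion.1 hx
      rw [Fval n x hn]
      rcases hn with hn | hn
      · rw [(invAll n).2.2.2.1 x (Or.inl hn)]
        exact hhGX_sub_E' ⟨x, Or.inl hn, rfl⟩
      · exact (invAll n).2.2.2.2.2 ⟨x, hn, rfl⟩
    · intro y' hy'
      rw [he'] at hy'
      obtain ⟨n, rfl⟩ := hy'
      obtain ⟨x, hx, hfx⟩ := (stepAll n).2.2.2.2
      have hxE : x ∈ E := by
        rw [domE]
        exact Set.mem_iUnion.2 ⟨n + 1, hx⟩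
      exact ⟨x, hxE, by rw [Fval (n + 1) x hx]; exact hfx⟩
  exact ⟨F, FeqH, embF, imgF⟩
/-- models of dimension at most ℵ₁ of a class satisfying axioms I
and II; the map `ψ = f₀ ∪ ψ_B` extends to a closed embedding, which is an
isomorphism if the image of `ψ` spans `H'`. -/
theorem statement_1 (L : FirstOrder.Language.{u, u}) (C : QMModel L → Prop)
    (hI : AxiomI C) (hII : AxiomII C)
    (H H' : QMModel L) (hH : C H) (hH' : C H')
    (hdim : ∃ B0 : Set H.carrier, IsBasisOver H.cl ∅ B0 ∧ #B0 ≤ Cardinal.aleph 1)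
    (G : Set H.carrier) (hG : EmptyOrCtbleClosed H G)
    (f₀ : H.carrier → H'.carrier) (hf₀ : IsClosedPartialEmb H H' G f₀)
    (B : Set H.carrier) (hB : IsBasisOver H.cl G B)
    (ψ : H.carrier → H'.carrier) (hψinj : Set.InjOn ψ B)
    (hψind : IndepOver H'.cl (f₀ '' G) (ψ '' B)) :
    ∃ ψhat : H.carrier → H'.carrier,
      (∀ x ∈ G, ψhat x = f₀ x) ∧ (∀ x ∈ B, ψhat x = ψ x) ∧
      IsClosedPartialEmb H H' Set.univ ψhat ∧
      (H'.cl (f₀ '' G ∪ ψ '' B) = Set.univ → Function.Bijective ψhat) := by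
  have pg := hI.pregeom H hH
  have pg' := hI.pregeom H' hH'
  -- cardinality of the basis
  have hBcard : #↥B ≤ Cardinal.aleph 1 := by
    classical
    obtain ⟨B0, hB0, hB0card⟩ := hdim
    by_cases hB0fin : B0.Finite
    · have hcc : (H.cl (∅ ∪ B0)).Countable :=
        hI.ccp H hH _ (by rwa [Set.empty_union])
      rw [hB0.2] at hcc
      have hBc : B.Countable := hcc.mono (Set.subset_univ B)
      exact le_trans (Cardinal.le_aleph0_iff_set_countable.2 hBc)
        Cardinal.aleph0_lt_aleph_one.le
    · haveI : Infinite ↥B0 := Set.infinite_coe_iff.2 hB0fin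
      have hmemB : ∀ b : ↥B, (b : H.carrier) ∈ H.cl (∅ ∪ B0) := by
        intro b
        rw [hB0.2]
        trivial
      choose Fb hFb hbFb using fun b : ↥B =>
        (hI.pregeom H hH).finChar (∅ ∪ B0) ↑b (hmemB b)
      have hencex : ∀ F : Finset H.carrier, ∃ enc : H.carrier → ℕ,
          Set.InjOn enc (H.cl ↑F) := fun F =>
        Set.countable_iff_exists_injOn.1 (hI.ccp H hH ↑F F.finite_toSet)
      choose enc henc using hencex
      set J : ↥B → {F : Finset H.carrier // ↑F ⊆ B0} × ℕ := fun b =>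
        (⟨Fb b, by have := hFb b; rwa [Set.empty_union] at this⟩, enc (Fb b) ↑b)
        with hJdef
      have hJinj : Function.Injective J := by
        intro a b hab
        have h1 : Fb a = Fb b := congrArg (fun p => p.1.1) hab
        have h2 : enc (Fb a) ↑a = enc (Fb b) ↑b := congrArg Prod.snd hab
        rw [h1] at h2
        have h3 : (↑a : H.carrier) ∈ H.cl ↑(Fb b) := h1 ▸ hbFb a
        exact Subtype.ext (henc (Fb b) h3 (hbFb b) h2)
      have h4 : #↥B ≤ #({F : Finset H.carrier // ↑F ⊆ B0} × ℕ) :=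
        Cardinal.mk_le_of_injective hJinj
      have hsubinj : Function.Injective
          (fun F : {F : Finset H.carrier // ↑F ⊆ B0} =>
            F.1.subtype (· ∈ B0)) := by
        intro F1 F2 h12
        apply Subtype.ext
        have k1 := Finset.subtype_map (p := (· ∈ B0)) (s := F1.1)
        have k2 := Finset.subtype_map (p := (· ∈ B0)) (s := F2.1)
        rw [Finset.filter_true_of_mem (fun x hx => F1.2 hx)] at k1
        rw [Finset.filter_true_of_mem (fun x hx => F2.2 hx)] at k2
        have h12' : F1.1.subtype (· ∈ B0) = F2.1.subtype (· ∈ B0) := h12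
        rw [← k1, ← k2, h12']
      have h5 : #{F : Finset H.carrier // ↑F ⊆ B0} ≤ #(Finset ↥B0) :=
        Cardinal.mk_le_of_injective hsubinj
      have h6 : #(Finset ↥B0) = #↥B0 := Cardinal.mk_finset_of_infinite _
      calc #↥B ≤ #({F : Finset H.carrier // ↑F ⊆ B0} × ℕ) := h4
        _ = #{F : Finset H.carrier // ↑F ⊆ B0} * ℵ₀ := by
            simp [Cardinal.mk_prod]
        _ ≤ #(Finset ↥B0) * ℵ₀ := mul_le_mul_left h5 _
        _ = #↥B0 * ℵ₀ := by rw [h6]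
        _ ≤ Cardinal.aleph 1 * ℵ₀ := mul_le_mul_left hB0card _
        _ = Cardinal.aleph 1 := Cardinal.mul_aleph0_eq Cardinal.aleph0_lt_aleph_one.le
  -- a well-order on B all whose initial segments are countable
  obtain ⟨emb⟩ : Nonempty (↥B ↪ (Cardinal.aleph 1).ord.ToType) := by
    rw [← Cardinal.le_def, Cardinal.mk_ord_toType]
    exact hBcard
  set ι := ↥B with hιdef
  set rlt : ι → ι → Prop := fun a b => emb a < emb b with hrltdef
  have rwf : WellFounded rlt := InvImage.wf emb wellFounded_lt
  have rtricho : ∀ a b : ι, rlt a b ∨ a = b ∨ rlt b a := by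
    intro a b
    rcases lt_trichotomy (emb a) (emb b) with hc | hc | hc
    · exact Or.inl hc
    · exact Or.inr (Or.inl (emb.injective hc))
    · exact Or.inr (Or.inr hc)
  have rirrefl : ∀ a : ι, ¬ rlt a a := fun a => lt_irrefl _
  have rtrans : ∀ {a b c : ι}, rlt a b → rlt b c → rlt a c := fun h1 h2 => lt_trans h1 h2
  have segctble : ∀ i : ι, {j : ι | rlt j i}.Countable := by
    intro i
    rw [Cardinal.countable_iff_lt_aleph_one]
    refine lt_of_le_of_lt ?_ (Cardinal.mk_Iio_ord_toType (emb i))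
    exact Cardinal.mk_le_of_injective (f := fun j : {j : ι | rlt j i} =>
      (⟨emb j.1, j.2⟩ : Set.Iio (emb i))) (by
        intro a b hab
        simp only [Subtype.mk.injEq] at hab
        exact Subtype.ext (emb.injective (congrArg Subtype.val hab)))
  -- the basic objects
  set G' := f₀ '' G with hG'def
  set Blt : ι → Set H.carrier := fun i => Subtype.val '' {j | rlt j i} with hBltdef
  set Ble : ι → Set H.carrier := fun i => Subtype.val '' {j | rlt j i ∨ j = i} with hBledef
  set P0 := H.cl G with hP0def
  set P0' := H'.cl G' with hP0'def
  set Pre : ι → Set H.carrier := fun i => H.cl (G ∪ Blt i) with hPredef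
  set Dst : ι → Set H.carrier := fun i => H.cl (G ∪ Ble i) with hDstdef
  set Pre' : ι → Set H'.carrier := fun i => H'.cl (G' ∪ ψ '' Blt i) with hPre'def
  set Dst' : ι → Set H'.carrier := fun i => H'.cl (G' ∪ ψ '' Ble i) with hDst'def
  have hGctble : G.Countable := by
    rcases hG with hh | hh
    · rw [hh]; exact Set.countable_empty
    · exact hh.1
  have hG'eoc : EmptyOrCtbleClosed H' G' := by
    rcases hG with hh | hh
    · left; rw [hG'def, hh, Set.image_empty]
    · exact Or.inr ⟨hh.1.image f₀, hf₀.2 G subset_rfl hh.2⟩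
  -- the base stage
  obtain ⟨g0, hg0eq, hg0emb, hg0img⟩ : ∃ g0 : H.carrier → H'.carrier,
      (∀ x ∈ G, g0 x = f₀ x) ∧ IsPartialEmb H H' P0 g0 ∧ g0 '' P0 = P0' := by
    obtain ⟨g0, h1, h2, h3⟩ := BF hI hII hH hH' G ∅ f₀ hG
      (by rw [hG'def] at hG'eoc; exact hG'eoc)
      (Set.finite_empty) (by rw [Set.union_empty]; exact hf₀.1)
      (by
        intro hcl
        rw [Set.union_empty] at hcl ⊢
        have hGe : G = ∅ := Set.eq_empty_of_subset_empty (hcl ▸ pg.subset_cl G)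
        rw [hGe, Set.image_empty]
        have := hf₀.2 ∅ (by rw [hGe]) (by rw [← hGe] at hcl ⊢; exact hcl)
        rwa [Set.image_empty] at this)
    rw [Set.union_empty] at h1 h2 h3
    exact ⟨g0, h1, h2, h3⟩
  -- the transfinite recursion
  haveI : Nonempty (H.carrier → H'.carrier) := ⟨ψ⟩
  set Spec : ι → (H.carrier → H'.carrier) → (H.carrier → H'.carrier) → Prop :=
    fun i g F' => (∀ x ∈ Pre i, F' x = g x) ∧ F' ↑i = ψ ↑i ∧
      IsPartialEmb H H' (Dst i) F' ∧ F' '' Dst i = Dst' i with hSpecdef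
  set F : ι → H.carrier → H'.carrier :=
    rwf.fix (fun i rec => Classical.epsilon (Spec i (fun x =>
      @dite _ (∃ j, rlt j i ∧ x ∈ Dst j) (Classical.propDecidable _)
        (fun hx => rec (Exists.choose hx) (Exists.choose_spec hx).1 x)
        (fun _ => g0 x)))) with hFdef
  set glue : ι → H.carrier → H'.carrier := fun i x =>
    @dite _ (∃ j, rlt j i ∧ x ∈ Dst j) (Classical.propDecidable _)
      (fun hx => F (Exists.choose hx) x) (fun _ => g0 x) with hgluedef
  have hFeq : ∀ i, F i = Classical.epsilon (Spec i (glue i)) := by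
    intro i
    rw [hFdef, WellFounded.fix_eq]
  -- basic inclusions
  have hPsubD : ∀ i, Pre i ⊆ Dst i := by
    intro i
    apply pg.mono
    apply Set.union_subset_union_right
    exact Set.image_mono (fun j hj => Or.inl hj)
  have hDsubP : ∀ j i, rlt j i → Dst j ⊆ Pre i := by
    intro j i hji
    apply pg.mono
    apply Set.union_subset_union_right
    apply Set.image_mono
    rintro k (hk | rfl)
    · exact rtrans hk hji
    · exact hji
  have hDmono : ∀ j i, rlt j i → Dst j ⊆ Dst i := fun j i h =>
    (hDsubP j i h).trans (hPsubD i)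
  have hP0subP : ∀ i, P0 ⊆ Pre i := fun i => pg.mono Set.subset_union_left
  have hP0subD : ∀ i, P0 ⊆ Dst i := fun i => (hP0subP i).trans (hPsubD i)
  -- the main induction
  set Claim : ι → Prop := fun i => Spec i (glue i) (F i) ∧
    (∀ j, rlt j i → ∀ x ∈ Dst j, F i x = F j x) ∧
    (∀ x ∈ P0, F i x = g0 x) with hClaimdef
  have step : ∀ i, (∀ j, rlt j i → Claim j) → Claim i := by
    intro i ih
    -- coherence of the glued map
    have hglue_val : ∀ j, rlt j i → ∀ x ∈ Dst j, glue i x = F j x := by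
      intro j hj x hx
      have hex : ∃ j', rlt j' i ∧ x ∈ Dst j' := ⟨j, hj, hx⟩
      have h1 : glue i x = F (Exists.choose hex) x := dif_pos hex
      obtain ⟨hc1, hc2⟩ := Exists.choose_spec hex
      rw [h1]
      rcases rtricho (Exists.choose hex) j with hc | hc | hc
      · exact ((ih j hj).2.1 _ hc x hc2).symm
      · rw [hc]
      · exact (ih _ hc1).2.1 j hc x hx
    have hglue_base : ∀ x ∈ P0, glue i x = g0 x := by
      intro x hx
      by_cases hex : ∃ j', rlt j' i ∧ x ∈ Dst j'
      · have h1 : glue i x = F (Exists.choose hex) x := dif_pos hex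
        rw [h1]
        exact (ih _ (Exists.choose_spec hex).1).2.2 x hx
      · exact dif_neg hex
    suffices hex : ∃ F', Spec i (glue i) F' by
      have hspec : Spec i (glue i) (F i) := by
        rw [hFeq i]
        exact Classical.epsilon_spec hex
      refine ⟨hspec, ?_, ?_⟩
      · intro j hj x hx
        rw [hspec.1 x (hDsubP j i hj hx)]
        exact hglue_val j hj x hx
      · intro x hx
        rw [hspec.1 x (hP0subP i hx)]
        exact hglue_base x hx
    -- directed union description of `Pre i`
    haveI : Nonempty (Option {j : ι // rlt j i}) := ⟨none⟩
    set Uset : Option {j : ι // rlt j i} → Set H.carrier :=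
      fun s => s.elim G (fun j => G ∪ Ble j.1) with hUdef
    set Tset : Option {j : ι // rlt j i} → Set H.carrier :=
      fun s => s.elim P0 (fun j => Dst j.1) with hTdef
    set U'set : Option {j : ι // rlt j i} → Set H'.carrier :=
      fun s => s.elim G' (fun j => G' ∪ ψ '' Ble j.1) with hU'def
    set T'set : Option {j : ι // rlt j i} → Set H'.carrier :=
      fun s => s.elim P0' (fun j => Dst' j.1) with hT'def
    have hBle_mono : ∀ j k : ι, (rlt j k ∨ j = k) → Ble j ⊆ Ble k := by
      intro j k hjk
      apply Set.image_mono
      rintro l (hl | rfl)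
      · rcases hjk with hjk | rfl
        · exact Or.inl (rtrans hl hjk)
        · exact Or.inl hl
      · exact hjk
    have hBle_blt : ∀ j : ι, rlt j i → Ble j ⊆ Blt i := by
      intro j hj
      apply Set.image_mono
      rintro l (hl | rfl)
      · exact rtrans hl hj
      · exact hj
    have hUdir : Directed (· ⊆ ·) Uset := by
      rintro (_ | j) (_ | k)
      · exact ⟨none, subset_rfl, subset_rfl⟩
      · exact ⟨some k, Set.subset_union_left, subset_rfl⟩
      · exact ⟨some j, subset_rfl, Set.subset_union_left⟩
      · rcases rtricho j.1 k.1 with hc | hc | hc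
        · exact ⟨some k, Set.union_subset_union_right _ (hBle_mono _ _ (Or.inl hc)),
            subset_rfl⟩
        · exact ⟨some k, Set.union_subset_union_right _ (hBle_mono _ _ (Or.inr hc)),
            subset_rfl⟩
        · exact ⟨some j, subset_rfl,
            Set.union_subset_union_right _ (hBle_mono _ _ (Or.inl hc))⟩
    have hU'dir : Directed (· ⊆ ·) U'set := by
      rintro (_ | j) (_ | k)
      · exact ⟨none, subset_rfl, subset_rfl⟩
      · exact ⟨some k, Set.subset_union_left, subset_rfl⟩
      · exact ⟨some j, subset_rfl, Set.subset_union_left⟩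
      · rcases rtricho j.1 k.1 with hc | hc | hc
        · exact ⟨some k, Set.union_subset_union_right _
            (Set.image_mono (hBle_mono _ _ (Or.inl hc))), subset_rfl⟩
        · exact ⟨some k, Set.union_subset_union_right _
            (Set.image_mono (hBle_mono _ _ (Or.inr hc))), subset_rfl⟩
        · exact ⟨some j, subset_rfl, Set.union_subset_union_right _
            (Set.image_mono (hBle_mono _ _ (Or.inl hc)))⟩
    have hTU : ∀ s, Tset s = H.cl (Uset s) := by rintro (_ | j) <;> rfl
    have hT'U : ∀ s, T'set s = H'.cl (U'set s) := by rintro (_ | j) <;> rfl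
    have hUnionU : (⋃ s, Uset s) = G ∪ Blt i := by
      apply Set.Subset.antisymm
      · apply Set.iUnion_subset
        rintro (_ | j)
        · exact Set.subset_union_left
        · exact Set.union_subset Set.subset_union_left
            ((hBle_blt j.1 j.2).trans Set.subset_union_right)
      · apply Set.union_subset
        · exact fun x hx => Set.mem_iUnion.2 ⟨none, hx⟩
        · rintro x ⟨j, hj, rfl⟩
          exact Set.mem_iUnion.2 ⟨some ⟨j, hj⟩, Or.inr ⟨j, Or.inr rfl, rfl⟩⟩
    have hUnionU' : (⋃ s, U'set s) = G' ∪ ψ '' Blt i := by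
      apply Set.Subset.antisymm
      · apply Set.iUnion_subset
        rintro (_ | j)
        · exact Set.subset_union_left
        · exact Set.union_subset Set.subset_union_left
            ((Set.image_mono (hBle_blt j.1 j.2)).trans Set.subset_union_right)
      · apply Set.union_subset
        · exact fun x hx => Set.mem_iUnion.2 ⟨none, hx⟩
        · rintro _ ⟨_, ⟨j, hj, rfl⟩, rfl⟩
          exact Set.mem_iUnion.2
            ⟨some ⟨j, hj⟩, Or.inr ⟨↑j, ⟨j, Or.inr rfl, rfl⟩, rfl⟩⟩
    have hPreUnion : Pre i = ⋃ s, Tset s := by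
      have h1 : H.cl (⋃ s, Uset s) = ⋃ s, H.cl (Uset s) :=
        pg.cl_iUnion_directed Uset hUdir
      rw [hUnionU] at h1
      calc Pre i = H.cl (G ∪ Blt i) := rfl
        _ = ⋃ s, H.cl (Uset s) := h1
        _ = ⋃ s, Tset s := (Set.iUnion_congr fun s => (hTU s).symm)
    have hPre'Union : Pre' i = ⋃ s, T'set s := by
      have h1 : H'.cl (⋃ s, U'set s) = ⋃ s, H'.cl (U'set s) :=
        pg'.cl_iUnion_directed U'set hU'dir
      rw [hUnionU'] at h1
      calc Pre' i = H'.cl (G' ∪ ψ '' Blt i) := rfl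
        _ = ⋃ s, H'.cl (U'set s) := h1
        _ = ⋃ s, T'set s := (Set.iUnion_congr fun s => (hT'U s).symm)
    have hstage : ∀ s, IsPartialEmb H H' (Tset s) (glue i) ∧
        glue i '' Tset s = T'set s := by
      rintro (_ | j)
      · constructor
        · exact isPartialEmb_congr (fun x hx => (hglue_base x hx).symm) hg0emb
        · show glue i '' P0 = P0'
          rw [Set.image_congr hglue_base, hg0img]
      · constructor
        · exact isPartialEmb_congr (fun x hx => (hglue_val j.1 j.2 x hx).symm)
            (ih j.1 j.2).1.2.2.1
        · show glue i '' Dst j.1 = Dst' j.1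
          rw [Set.image_congr (hglue_val j.1 j.2), (ih j.1 j.2).1.2.2.2]
    have hTdir : Directed (· ⊆ ·) Tset := by
      intro a b
      obtain ⟨c, h1, h2⟩ := hUdir a b
      refine ⟨c, ?_, ?_⟩
      · rw [hTU a, hTU c]; exact pg.mono h1
      · rw [hTU b, hTU c]; exact pg.mono h2
    have hQemb : IsPartialEmb H H' (Pre i) (glue i) := by
      constructor
      · intro x hx y hy hxy
        rw [hPreUnion] at hx hy
        obtain ⟨sx, hsx⟩ := Set.mem_iUnion.1 hx
        obtain ⟨sy, hsy⟩ := Set.mem_iUnion.1 hy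
        obtain ⟨sc, h1, h2⟩ := hTdir sx sy
        exact (hstage sc).1.1 (h1 hsx) (h2 hsy) hxy
      · intro n φ hφ a ha
        have hmem : ∀ t, a t ∈ ⋃ s, Tset s := fun t => hPreUnion ▸ ha t
        obtain ⟨s0, haT⟩ := exists_stage Tset hTdir a hmem
        exact (hstage s0).1.2 n φ hφ a haT
    have hQimg : glue i '' Pre i = Pre' i := by
      rw [hPreUnion, Set.image_iUnion, hPre'Union]
      exact Set.iUnion_congr fun s => (hstage s).2
    have hBltctble : (Blt i).Countable := (segctble i).image _
    have hPrectble : (Pre i).Countable :=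
      cl_countable pg (hI.ccp H hH) (hGctble.union hBltctble)
    have hPreclosed : H.cl (Pre i) = Pre i := pg.idem _
    have hEocP : EmptyOrCtbleClosed H (Pre i) := Or.inr ⟨hPrectble, hPreclosed⟩
    have hEocP' : EmptyOrCtbleClosed H' (glue i '' Pre i) := by
      refine Or.inr ⟨hPrectble.image _, ?_⟩
      rw [hQimg]
      exact pg'.idem _
    -- the new point is independent
    have hiPre : (↑i : H.carrier) ∉ Pre i := by
      intro hmem
      apply hB.1 ↑i i.2
      refine pg.mono (Set.union_subset_union_right G ?_) hmem
      rintro _ ⟨j, hj, rfl⟩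
      refine ⟨j.2, ?_⟩
      simp only [Set.mem_singleton_iff]
      intro heq
      exact rirrefl i (Subtype.ext heq ▸ hj)
    have hψiPre' : ψ ↑i ∉ H'.cl (glue i '' Pre i) := by
      rw [hQimg, show H'.cl (Pre' i) = Pre' i from pg'.idem _]
      intro hmem
      apply hψind (ψ ↑i) ⟨↑i, i.2, rfl⟩
      refine pg'.mono (Set.union_subset_union_right G' ?_) hmem
      rintro _ ⟨_, ⟨j, hj, rfl⟩, rfl⟩
      refine ⟨⟨↑j, j.2, rfl⟩, ?_⟩
      simp only [Set.mem_singleton_iff]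
      intro heq
      exact rirrefl i (Subtype.ext (hψinj j.2 i.2 heq) ▸ hj)
    have hhemb := hII.homog1 H H' hH hH' (Pre i) (glue i '' Pre i) (glue i)
      hEocP hEocP' hQemb rfl ↑i (ψ ↑i)
      (by rw [hPreclosed]; exact hiPre) hψiPre'
    have himgPre : extend1 (glue i) ↑i (ψ ↑i) '' Pre i = glue i '' Pre i :=
      Set.image_congr fun x hx => extend1_neg _ _ _ (fun he => hiPre (he ▸ hx))
    obtain ⟨F', hF'eq, hF'emb, hF'img⟩ := BF hI hII hH hH' (Pre i) {(↑i : H.carrier)}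
      (extend1 (glue i) ↑i (ψ ↑i)) hEocP (by rw [himgPre]; exact hEocP')
      (Set.finite_singleton _) hhemb (by
        intro hcl
        have hmem : (↑i : H.carrier) ∈ H.cl (Pre i ∪ {(↑i : H.carrier)}) :=
          pg.subset_cl _ (Set.mem_union_right _ rfl)
        rw [hcl] at hmem
        exact absurd hmem (Set.notMem_empty _))
    have hBlei : Ble i = Blt i ∪ {(↑i : H.carrier)} := by
      apply Set.Subset.antisymm
      · rintro _ ⟨j, hj | rfl, rfl⟩
        · exact Or.inl ⟨j, hj, rfl⟩
        · exact Or.inr rfl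
      · rintro x (⟨j, hj, rfl⟩ | hx)
        · exact ⟨j, Or.inl hj, rfl⟩
        · rw [Set.mem_singleton_iff] at hx
          exact ⟨i, Or.inr rfl, hx.symm⟩
    have hcl1 : H.cl (Pre i ∪ {(↑i : H.carrier)}) = Dst i := by
      calc H.cl (Pre i ∪ {(↑i : H.carrier)})
          = H.cl ((G ∪ Blt i) ∪ {(↑i : H.carrier)}) := pg.cl_union_cl_left _ _
        _ = H.cl (G ∪ Ble i) := by rw [Set.union_assoc, ← hBlei]
        _ = Dst i := rfl
    have hψBlei : ψ '' Ble i = ψ '' Blt i ∪ {ψ ↑i} := by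
      rw [hBlei, Set.image_union, Set.image_singleton]
    have hext_pos : extend1 (glue i) ↑i (ψ ↑i) ↑i = ψ ↑i := extend1_pos _ _ _
    have him2 : extend1 (glue i) ↑i (ψ ↑i) '' (Pre i ∪ {(↑i : H.carrier)})
        = Pre' i ∪ {ψ ↑i} := by
      rw [Set.image_union, Set.image_singleton, himgPre, hQimg, hext_pos]
    have hcl2 : H'.cl (extend1 (glue i) ↑i (ψ ↑i) '' (Pre i ∪ {(↑i : H.carrier)}))
        = Dst' i := by
      rw [him2]
      calc H'.cl (Pre' i ∪ {ψ ↑i})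
          = H'.cl ((G' ∪ ψ '' Blt i) ∪ {ψ ↑i}) := pg'.cl_union_cl_left _ _
        _ = H'.cl (G' ∪ ψ '' Ble i) := by rw [Set.union_assoc, ← hψBlei]
        _ = Dst' i := rfl
    refine ⟨F', ?_, ?_, ?_, ?_⟩
    · intro x hx
      rw [hF'eq x (Or.inl hx)]
      exact extend1_neg _ _ _ (fun he => hiPre (he ▸ hx))
    · rw [hF'eq ↑i (Or.inr rfl)]
      exact hext_pos
    · rw [← hcl1]
      exact hF'emb
    · rw [← hcl1, ← hcl2]
      exact hF'img
  have hClaim : ∀ i, Claim i := fun i => rwf.induction i step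
  -- assembling the global map
  have hagreeGlob : ∀ i j x, x ∈ Dst i → x ∈ Dst j → F i x = F j x := by
    intro i j x hxi hxj
    rcases rtricho i j with hc | rfl | hc
    · exact ((hClaim j).2.1 i hc x hxi).symm
    · rfl
    · exact (hClaim i).2.1 j hc x hxj
  set ψhat : H.carrier → H'.carrier := fun x =>
    @dite _ (∃ i, x ∈ Dst i) (Classical.propDecidable _)
      (fun hx => F (Exists.choose hx) x) (fun _ => g0 x) with hψhatdef
  have hψhatD : ∀ (i) (x), x ∈ Dst i → ψhat x = F i x := by
    intro i x hx
    have hex : ∃ i, x ∈ Dst i := ⟨i, hx⟩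
    have h1 : ψhat x = F (Exists.choose hex) x := dif_pos hex
    rw [h1]
    exact hagreeGlob _ i x (Exists.choose_spec hex) hx
  have hψhat0 : ∀ x ∈ P0, ψhat x = g0 x := by
    intro x hx
    by_cases hex : ∃ i, x ∈ Dst i
    · have h1 : ψhat x = F (Exists.choose hex) x := dif_pos hex
      rw [h1]
      exact (hClaim _).2.2 x hx
    · exact dif_neg hex
  -- global directed-union description
  haveI : Nonempty (Option ι) := ⟨none⟩
  set TT : Option ι → Set H.carrier := fun s => s.elim P0 Dst with hTTdef
  set TT' : Option ι → Set H'.carrier := fun s => s.elim P0' Dst' with hTT'def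
  set UU : Option ι → Set H.carrier := fun s => s.elim G (fun i => G ∪ Ble i)
    with hUUdef
  set UU' : Option ι → Set H'.carrier := fun s => s.elim G' (fun i => G' ∪ ψ '' Ble i)
    with hUU'def
  have hBle_mono : ∀ j k : ι, (rlt j k ∨ j = k) → Ble j ⊆ Ble k := by
    intro j k hjk
    apply Set.image_mono
    rintro l (hl | rfl)
    · rcases hjk with hjk | rfl
      · exact Or.inl (rtrans hl hjk)
      · exact Or.inl hl
    · exact hjk
  have hUUdir : Directed (· ⊆ ·) UU := by
    rintro (_ | j) (_ | k)
    · exact ⟨none, subset_rfl, subset_rfl⟩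
    · exact ⟨some k, Set.subset_union_left, subset_rfl⟩
    · exact ⟨some j, subset_rfl, Set.subset_union_left⟩
    · rcases rtricho j k with hc | hc | hc
      · exact ⟨some k, Set.union_subset_union_right _ (hBle_mono _ _ (Or.inl hc)),
          subset_rfl⟩
      · exact ⟨some k, Set.union_subset_union_right _ (hBle_mono _ _ (Or.inr hc)),
          subset_rfl⟩
      · exact ⟨some j, subset_rfl,
          Set.union_subset_union_right _ (hBle_mono _ _ (Or.inl hc))⟩
  have hUU'dir : Directed (· ⊆ ·) UU' := by
    rintro (_ | j) (_ | k)
    · exact ⟨none, subset_rfl, subset_rfl⟩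
    · exact ⟨some k, Set.subset_union_left, subset_rfl⟩
    · exact ⟨some j, subset_rfl, Set.subset_union_left⟩
    · rcases rtricho j k with hc | hc | hc
      · exact ⟨some k, Set.union_subset_union_right _
          (Set.image_mono (hBle_mono _ _ (Or.inl hc))), subset_rfl⟩
      · exact ⟨some k, Set.union_subset_union_right _
          (Set.image_mono (hBle_mono _ _ (Or.inr hc))), subset_rfl⟩
      · exact ⟨some j, subset_rfl, Set.union_subset_union_right _
          (Set.image_mono (hBle_mono _ _ (Or.inl hc)))⟩
  have hTTU : ∀ s, TT s = H.cl (UU s) := by rintro (_ | i) <;> rfl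
  have hTT'U : ∀ s, TT' s = H'.cl (UU' s) := by rintro (_ | i) <;> rfl
  have hUnionUU : (⋃ s, UU s) = G ∪ B := by
    apply Set.Subset.antisymm
    · apply Set.iUnion_subset
      rintro (_ | i)
      · exact Set.subset_union_left
      · refine Set.union_subset Set.subset_union_left ?_
        rintro _ ⟨j, _, rfl⟩
        exact Or.inr j.2
    · apply Set.union_subset
      · exact fun x hx => Set.mem_iUnion.2 ⟨none, hx⟩
      · intro b hb
        exact Set.mem_iUnion.2 ⟨some ⟨b, hb⟩, Or.inr ⟨⟨b, hb⟩, Or.inr rfl, rfl⟩⟩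
  have hUnionUU' : (⋃ s, UU' s) = G' ∪ ψ '' B := by
    apply Set.Subset.antisymm
    · apply Set.iUnion_subset
      rintro (_ | i)
      · exact Set.subset_union_left
      · refine Set.union_subset Set.subset_union_left ?_
        rintro _ ⟨_, ⟨j, _, rfl⟩, rfl⟩
        exact Or.inr ⟨↑j, j.2, rfl⟩
    · apply Set.union_subset
      · exact fun x hx => Set.mem_iUnion.2 ⟨none, hx⟩
      · rintro _ ⟨b, hb, rfl⟩
        exact Set.mem_iUnion.2
          ⟨some ⟨b, hb⟩, Or.inr ⟨b, ⟨⟨b, hb⟩, Or.inr rfl, rfl⟩, rfl⟩⟩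
  have hUniv : (Set.univ : Set H.carrier) = ⋃ s, TT s := by
    have h1 := pg.cl_iUnion_directed UU hUUdir
    rw [hUnionUU] at h1
    rw [← hB.2, h1]
    exact Set.iUnion_congr fun s => (hTTU s).symm
  have hIm : H'.cl (G' ∪ ψ '' B) = ⋃ s, TT' s := by
    have h1 := pg'.cl_iUnion_directed UU' hUU'dir
    rw [hUnionUU'] at h1
    rw [h1]
    exact Set.iUnion_congr fun s => (hTT'U s).symm
  have hstageT : ∀ s, IsPartialEmb H H' (TT s) ψhat ∧ ψhat '' TT s = TT' s := by
    rintro (_ | i)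
    · constructor
      · exact isPartialEmb_congr (fun x hx => (hψhat0 x hx).symm) hg0emb
      · show ψhat '' P0 = P0'
        rw [Set.image_congr hψhat0, hg0img]
    · constructor
      · exact isPartialEmb_congr (fun x hx => (hψhatD i x hx).symm)
          (hClaim i).1.2.2.1
      · show ψhat '' Dst i = Dst' i
        rw [Set.image_congr (hψhatD i), (hClaim i).1.2.2.2]
  have hTTdir : Directed (· ⊆ ·) TT := by
    intro a b
    obtain ⟨c, h1, h2⟩ := hUUdir a b
    refine ⟨c, ?_, ?_⟩
    · rw [hTTU a, hTTU c]; exact pg.mono h1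
    · rw [hTTU b, hTTU c]; exact pg.mono h2
  have hunivemb : IsPartialEmb H H' Set.univ ψhat := by
    constructor
    · intro x hx y hy hxy
      rw [hUniv] at hx hy
      obtain ⟨sx, hsx⟩ := Set.mem_iUnion.1 hx
      obtain ⟨sy, hsy⟩ := Set.mem_iUnion.1 hy
      obtain ⟨sc, h1, h2⟩ := hTTdir sx sy
      exact (hstageT sc).1.1 (h1 hsx) (h2 hsy) hxy
    · intro n φ hφ a ha
      have hmem : ∀ t, a t ∈ ⋃ s, TT s := fun t => hUniv ▸ Set.mem_univ (a t)
      obtain ⟨s0, haT⟩ := exists_stage TT hTTdir a hmem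
      exact (hstageT s0).1.2 n φ hφ a haT
  have hImg : ψhat '' Set.univ = H'.cl (G' ∪ ψ '' B) := by
    rw [hUniv, Set.image_iUnion, hIm]
    exact Set.iUnion_congr fun s => (hstageT s).2
  have closedmaps : ∀ X ⊆ Set.univ, H.cl X = X → H'.cl (ψhat '' X) = ψhat '' X := by
    intro X _ hXcl
    refine Set.Subset.antisymm ?_ (pg'.subset_cl _)
    intro y' hy'
    have hy'Im : y' ∈ ψhat '' Set.univ := by
      have h1 : ψhat '' X ⊆ ψhat '' Set.univ :=
        Set.image_mono (Set.subset_univ X)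
      rw [hImg] at h1
      have h2 := pg'.mono h1 hy'
      rw [pg'.idem] at h2
      rw [hImg]
      exact h2
    obtain ⟨x0, -, rfl⟩ := hy'Im
    haveI : Nonempty H.carrier := ⟨x0⟩
    set w := Function.invFunOn ψhat Set.univ with hwdef
    have hwleft : ∀ x, w (ψhat x) = x := fun x =>
      hunivemb.1.leftInvOn_invFunOn (Set.mem_univ x)
    have hwemb : IsPartialEmb H' H (ψhat '' Set.univ) w :=
      isPartialEmb_inv hunivemb w (fun x _ => hwleft x)
    have hkey := hI.clPreserved H' H hH' hH (ψhat '' Set.univ) w hwemb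
      (ψhat '' X) (Set.image_mono (Set.subset_univ X)) (ψhat x0) hy'
      ⟨x0, Set.mem_univ _, rfl⟩
    have hwX : w '' (ψhat '' X) = X := by
      rw [Set.image_image]
      calc (fun x => w (ψhat x)) '' X = id '' X :=
            Set.image_congr fun x _ => hwleft x
        _ = X := Set.image_id X
    rw [hwX, hwleft x0, hXcl] at hkey
    exact ⟨x0, hkey, rfl⟩
  refine ⟨ψhat, ?_, ?_, ⟨hunivemb, closedmaps⟩, ?_⟩
  · intro x hx
    rw [hψhat0 x (pg.subset_cl G hx), hg0eq x hx]
  · intro x hx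
    have hxD : x ∈ Dst ⟨x, hx⟩ :=
      pg.subset_cl _ (Or.inr ⟨⟨x, hx⟩, Or.inr rfl, rfl⟩)
    rw [hψhatD ⟨x, hx⟩ x hxD]
    exact (hClaim ⟨x, hx⟩).1.2.1
  · intro hsp
    constructor
    · intro a b hab
      exact hunivemb.1 (Set.mem_univ a) (Set.mem_univ b) hab
    · intro y'
      have hmem : y' ∈ ψhat '' Set.univ := by
        rw [hImg, hsp]
        trivial
      obtain ⟨x, -, hx⟩ := hmem
      exact ⟨x, hx⟩
end QMEC
end

section
/- Let M be a set, let cl be a pregeometry on M, and let B be an independent subset of M. Then for any subsets X, Y ⊆ B, cl(X) ∩ cl(Y) = cl(X ∩ Y). -/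
/-!  Common framework: quasiminimal excellent classes (Zilber / Kirby). -/

open FirstOrder FirstOrder.Language Cardinal Set

universe u

namespace QMEC

variable (L : FirstOrder.Language.{u, u})

variable {L}

/-- in a pregeometry, for subsets `X`, `Y` of an independent set
`B`, we have `cl(X) ∩ cl(Y) = cl(X ∩ Y)`. -/
theorem statement_4 {α : Type u} (cl : Set α → Set α) (hcl : IsPregeom cl)
    (B : Set α) (hB : Indep cl B) (X Y : Set α) (hX : X ⊆ B) (hY : Y ⊆ B) :
    cl X ∩ cl Y = cl (X ∩ Y) := by
  classical
  have hrev : cl (X ∩ Y) ⊆ cl X ∩ cl Y :=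
    Set.subset_inter (hcl.mono Set.inter_subset_left) (hcl.mono Set.inter_subset_right)
  refine Set.Subset.antisymm (fun a ha => ?_) hrev
  obtain ⟨haX, haY⟩ := ha
  obtain ⟨X₀, hX₀X, haX₀⟩ := hcl.finChar X a haX
  have hex : ∃ n, ∃ t : Finset α, t.card = n ∧ ↑t ⊆ X ∧ a ∈ cl ↑t :=
    ⟨X₀.card, X₀, rfl, hX₀X, haX₀⟩
  obtain ⟨t, htc, htX, hat⟩ := Nat.find_spec hex
  have hmin : ∀ u : Finset α, u.card < Nat.find hex → ↑u ⊆ X → a ∉ cl ↑u := by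
    intro u hu huX hau
    exact Nat.find_min hex hu ⟨u, rfl, huX, hau⟩
  -- every element of t lies in Y
  have htY : (↑t : Set α) ⊆ Y := by
    intro x hx
    have hxt : x ∈ t := hx
    set s : Finset α := t.erase x with hs
    have hunion : (↑t : Set α) = ↑s ∪ {x} := by
      rw [hs, Finset.coe_erase, Set.diff_union_self]
      exact (Set.union_eq_self_of_subset_right (by simpa using hxt)).symm
    have hscard : s.card < Nat.find hex := by
      rw [← htc]
      exact Finset.card_erase_lt_of_mem hxt
    have hsX : (↑s : Set α) ⊆ X := fun z hz => htX (Finset.erase_subset x t hz)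
    have hnas : a ∉ cl ↑s := hmin s hscard hsX
    have hxcl : x ∈ cl (↑s ∪ {a}) := by
      apply hcl.exchange _ a x _ hnas
      rw [← hunion]; exact hat
    have hxclY : x ∈ cl (↑s ∪ Y) := by
      have h1 : (↑s ∪ {a} : Set α) ⊆ cl (↑s ∪ Y) := by
        rintro z (hz | hz)
        · exact hcl.subset_cl _ (Or.inl hz)
        · rcases hz with rfl
          exact hcl.mono Set.subset_union_right haY
      have := hcl.mono h1 hxcl
      rwa [hcl.idem] at this
    by_contra hxY
    have hsub : (↑s ∪ Y : Set α) ⊆ B \ {x} := by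
      rintro z (hz | hz)
      · refine ⟨hX (hsX hz), ?_⟩
        simp only [Set.mem_singleton_iff]
        rintro rfl
        exact Finset.notMem_erase _ _ hz
      · refine ⟨hY hz, ?_⟩
        simp only [Set.mem_singleton_iff]
        rintro rfl
        exact hxY hz
    exact hB x (hX (htX hx)) (hcl.mono hsub hxclY)
  exact hcl.mono (Set.subset_inter htX htY) hat
end QMEC
end

section
/- Let 𝒞 be a quasiminimal excellent class. If 𝒞 contains a model of dimension κ, then for every cardinal λ ≤ κ, 𝒞 contains a model of dimension λ. Hence the set of dimensions of models of 𝒞 is an initial segment of the cardinals. -/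
/-!  Common framework: quasiminimal excellent classes (Zilber / Kirby). -/

open FirstOrder FirstOrder.Language Cardinal Set

universe u

namespace QMEC

variable (L : FirstOrder.Language.{u, u})

variable {L}

/-- if a quasiminimal excellent class contains a model of
dimension κ, then it contains a model of dimension λ for every λ ≤ κ; so the
dimensions of its models form an initial segment of the cardinals. -/
theorem statement_17 (L : FirstOrder.Language.{u, u}) (C : QMModel L → Prop)
    (hC : IsQEC C) (H : QMModel L) (hH : C H) (κ : Cardinal.{u})
    (hκ : HasDim L H κ) :
    ∀ lam : Cardinal.{u}, lam ≤ κ → ∃ H' : QMModel L, C H' ∧ HasDim L H' lam := by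

  intro lam hlam
  obtain ⟨B, ⟨hBi, hBcl⟩, hBcard⟩ := hκ
  -- pick a subset of B of cardinality lam
  obtain ⟨B₀, hB₀B, hB₀card⟩ :=
    (Cardinal.le_mk_iff_exists_subset).mp (hBcard ▸ hlam)
  obtain ⟨S, hS, hSC⟩ := hC.axI.closedSub H hH B₀
  have hpre := hC.axI.pregeom H hH
  refine ⟨H.substruct S (H.restrictCl S), hSC, ?_⟩
  -- the basis in the substructure
  refine ⟨Subtype.val ⁻¹' B₀, ⟨?_, ?_⟩, ?_⟩
  · -- independence
    rintro ⟨bv, hbS⟩ hb hmem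
    have hb0 : bv ∈ B₀ := hb
    have hsub : Subtype.val '' (∅ ∪ ((Subtype.val ⁻¹' B₀) \ {(⟨bv, hbS⟩ : ↥S)}))
        ⊆ B \ {bv} := by
      rintro x ⟨y, hy, rfl⟩
      rcases hy with hy | ⟨hy1, hy2⟩
      · exact absurd hy (Set.notMem_empty y)
      · refine ⟨hB₀B hy1, ?_⟩
        simp only [Set.mem_singleton_iff] at hy2 ⊢
        exact fun h => hy2 (Subtype.ext h)
    have hmem' : bv ∈ H.cl (B \ {bv}) := hpre.mono hsub hmem
    have hind : bv ∉ H.cl (∅ ∪ (B \ {bv})) := hBi _ (hB₀B hb0)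
    rw [Set.empty_union] at hind
    exact hind hmem' 
  · -- closure is everything
    ext ⟨xv, hxS⟩
    refine iff_of_true ?_ (Set.mem_univ _)
    show xv ∈ H.cl (Subtype.val '' ((∅ : Set ↥S) ∪ (Subtype.val ⁻¹' B₀)))
    have himg : Subtype.val '' ((∅ : Set ↥S) ∪ (Subtype.val ⁻¹' B₀)) = B₀ := by
      rw [Set.empty_union]
      apply Set.image_preimage_eq_of_subset
      intro y hy
      exact ⟨⟨y, by rw [← SetLike.mem_coe, hS]; exact hpre.subset_cl B₀ hy⟩, rfl⟩
    rw [himg]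
    have := hxS
    rw [← SetLike.mem_coe, hS] at this
    exact this
  · -- cardinality
    rw [← hB₀card]
    apply Cardinal.mk_preimage_of_injective_of_subset_range _ _ Subtype.val_injective
    intro y hy
    exact ⟨⟨y, by rw [← SetLike.mem_coe, hS]; exact hpre.subset_cl B₀ hy⟩, rfl⟩


end QMEC
end
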